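/- Let A be a commutative ring and I ⊆ A an ideal generated by a regular sequence (s₁, …, s_k) in A. Let B be a commutative A-algebra such that the images of s₁, …, s_k form a regular sequence in B. Then Tor_i^A(A/I, B) = 0 for all i ≥ 1. -/

import Mathlib

/-!
Fix a projective resolution `P` of `B`. Each `P_n` is flat, so `X ↦ X ⊗ P` sends short exact
sequences of modules to short exact sequences of complexes, and its homology is
`Tor_*(X, B)`, with `H₀ = X ⊗ B`. If `s` is regular on `X` and on `X ⊗ B`, the long exact
sequence of `0 → X →(s) X → X/sX → 0` gives `Tor_{≥2}(X/sX, B) = 0` from `Tor_{≥1}(X, B) = 0`,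
while `Tor_1(X/sX, B)` injects into the kernel of `s` on `X ⊗ B`, which is zero. Since
`(X/sX) ⊗ B ≅ (X ⊗ B)/s(X ⊗ B)`, this can be iterated along the sequence, starting from the flat
module `X = A`.
-/

open CategoryTheory CategoryTheory.Limits MonoidalCategory RingTheory.Sequence TensorProduct

universe u

lemma HomologicalComplex.homologyMap_smul {R C : Type*} [Semiring R] [Category C] [Preadditive C]
    [Linear R C] {ι : Type*} {c : ComplexShape ι} {K L : HomologicalComplex C c}
    (φ : K ⟶ L) (r : R) (i : ι) [K.HasHomology i] [L.HasHomology i] :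
    homologyMap (r • φ) i = r • homologyMap φ i :=
  ShortComplex.homologyMap_smul ((shortComplexFunctor C c i).map φ) r

/-- The connecting map `H₁(S.X₃) ⟶ H₀(S.X₁)` vanishes because `H₀(S.f)` is a monomorphism. -/
lemma CategoryTheory.ShortComplex.ShortExact.isZero_homology_succ_X₃ {C : Type*} [Category C]
    [Abelian C] {S : ShortComplex (ChainComplex C ℕ)} (hS : S.ShortExact)
    (h₁ : ∀ n, IsZero (S.X₁.homology (n + 1))) (h₂ : ∀ n, IsZero (S.X₂.homology (n + 1)))
    (hf : Mono (HomologicalComplex.homologyMap S.f 0)) (n : ℕ) :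
    IsZero (S.X₃.homology (n + 1)) := by
  have hδ : hS.δ (n + 1) n rfl = 0 := by
    cases n with
    | zero => exact zero_of_comp_mono _ (hS.δ_comp 1 0 rfl)
    | succ m => exact (h₁ m).eq_of_tgt _ _
  exact (hS.homology_exact₃ (n + 1) n rfl).isZero_X₂ ((h₂ n).eq_of_src _ _) hδ

namespace CategoryTheory.ProjectiveResolution

variable {A : Type u} [CommRing A] {M : ModuleCat.{u} A} (P : ProjectiveResolution M)

noncomputable def tensorComplex : ModuleCat.{u} A ⥤ ChainComplex (ModuleCat.{u} A) ℕ :=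
  (((tensoringRight (ModuleCat.{u} A)).mapHomologicalComplex _).obj P.complex).asFunctor

instance : P.tensorComplex.Additive where
  map_add {_ _ f g} := by
    ext i : 1
    exact MonoidalPreadditive.add_whiskerRight f g

instance : P.tensorComplex.Linear A where
  map_smul {_ _} f r := by
    ext i : 1
    exact MonoidalLinear.smul_whiskerRight r f _

noncomputable def torIsoHomologyTensorComplex (X : ModuleCat.{u} A) (n : ℕ) :
    ((Tor (ModuleCat.{u} A) n).obj X).obj M ≅ (P.tensorComplex.obj X).homology n :=
  P.isoLeftDerivedObj (tensorLeft X) n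

noncomputable def homologyZeroTensorComplexIso (X : ModuleCat.{u} A) :
    (P.tensorComplex.obj X).homology 0 ≅ X ⊗ M :=
  (P.torIsoHomologyTensorComplex X 0).symm ≪≫ (tensorLeft X).leftDerivedZeroIsoSelf.app M

/-- Each `P_n` is projective, hence flat, so `- ⊗ P_n` is exact. -/
lemma shortExact_map_tensorComplex {S : ShortComplex (ModuleCat.{u} A)} (hS : S.ShortExact) :
    (S.map P.tensorComplex).ShortExact :=
  HomologicalComplex.shortExact_of_degreewise_shortExact _ fun n ↦
    hS.map_of_exact (tensorRight (P.complex.X n))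

end CategoryTheory.ProjectiveResolution

namespace ModuleCat

variable {A : Type u} [CommRing A] {M : ModuleCat.{u} A}

lemma isZero_Tor_succ_of_flat (X : ModuleCat.{u} A) [Module.Flat A X] (n : ℕ) :
    IsZero (((Tor (ModuleCat.{u} A) (n + 1)).obj X).obj M) := by
  let P := CategoryTheory.projectiveResolution M
  have : (((tensorLeft X).mapHomologicalComplex _).obj P.complex).ExactAt (n + 1) :=
    (P.complex_exactAt_succ n).map (tensorLeft X)
  exact this.isZero_homology.of_iso (P.isoLeftDerivedObj (tensorLeft X) (n + 1))

lemma isZero_Tor_of_linearEquiv {X Y : Type u} [AddCommGroup X] [Module A X] [AddCommGroup Y]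
    [Module A Y] (e : X ≃ₗ[A] Y) {n : ℕ}
    (h : IsZero (((Tor (ModuleCat.{u} A) n).obj (of A X)).obj M)) :
    IsZero (((Tor (ModuleCat.{u} A) n).obj (of A Y)).obj M) :=
  h.of_iso (((Tor (ModuleCat.{u} A) n).mapIso e.toModuleIso).app M).symm

lemma isZero_Tor_succ_quotSMulTop {X : ModuleCat.{u} A} {s : A} (hX : IsSMulRegular X s)
    (hXM : IsSMulRegular (X ⊗ M : ModuleCat.{u} A) s)
    (h : ∀ n, IsZero (((Tor (ModuleCat.{u} A) (n + 1)).obj X).obj M)) (n : ℕ) :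
    IsZero (((Tor (ModuleCat.{u} A) (n + 1)).obj (of A (QuotSMulTop s X))).obj M) := by
  let P := CategoryTheory.projectiveResolution M
  have hS := P.shortExact_map_tensorComplex hX.smulShortComplex_shortExact
  have hXP (k : ℕ) : IsZero ((P.tensorComplex.obj X).homology (k + 1)) :=
    (h k).of_iso (P.torIsoHomologyTensorComplex X (k + 1)).symm
  have hf : ((X.smulShortComplex s).map P.tensorComplex).f = s • 𝟙 (P.tensorComplex.obj X) := by
    change P.tensorComplex.map (s • 𝟙 X) = _
    rw [P.tensorComplex.map_smul, P.tensorComplex.map_id]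
  have hmono : Mono (HomologicalComplex.homologyMap (s • 𝟙 (P.tensorComplex.obj X)) 0) := by
    rw [HomologicalComplex.homologyMap_smul, HomologicalComplex.homologyMap_id,
      mono_iff_injective]
    exact ((P.homologyZeroTensorComplexIso X).toLinearEquiv.isSMulRegular_congr s).mpr hXM
  exact (hS.isZero_homology_succ_X₃ hXP hXP (hf ▸ hmono) n).of_iso
    (P.torIsoHomologyTensorComplex _ _)

theorem isZero_Tor_succ_quotient_ofList_smul_top {X : Type u} [AddCommGroup X] [Module A X]
    {rs : List A} (hX : IsWeaklyRegular X rs) (hXM : IsWeaklyRegular (X ⊗[A] M) rs)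
    (h : ∀ n, IsZero (((Tor (ModuleCat.{u} A) (n + 1)).obj (of A X)).obj M)) (n : ℕ) :
    IsZero (((Tor (ModuleCat.{u} A) (n + 1)).obj
      (of A (X ⧸ (Ideal.ofList rs • ⊤ : Submodule A X)))).obj M) := by
  induction rs generalizing X with
  | nil =>
    exact isZero_Tor_of_linearEquiv
      (Submodule.quotEquivOfEqBot _ (by rw [Ideal.ofList_nil, Submodule.bot_smul])).symm (h n)
  | cons r rs ih =>
    rw [isWeaklyRegular_cons_iff] at hX hXM
    have hQM : IsWeaklyRegular (QuotSMulTop r X ⊗[A] M) rs :=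
      ((QuotSMulTop.quotSMulTopTensorEquivQuotSMulTop r M X).isWeaklyRegular_congr rs).mpr hXM.2
    exact isZero_Tor_of_linearEquiv
      (Submodule.quotOfListConsSMulTopEquivQuotSMulTopInner X r rs).symm
      (ih hX.2 hQM (isZero_Tor_succ_quotSMulTop (X := of A X) hX.1 hXM.1 h))

end ModuleCat

theorem tor_vanishing_of_regular_sequence {A : Type u} [CommRing A]
    {B : Type u} [CommRing B] [Algebra A B]
    (rs : List A)
    (hA : RingTheory.Sequence.IsWeaklyRegular A rs)
    (hB : RingTheory.Sequence.IsWeaklyRegular B (rs.map (algebraMap A B)))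
    (I : Ideal A) (hI : I = Ideal.ofList rs)
    (i : ℕ) (hi : 1 ≤ i) :
    IsZero (((Tor (ModuleCat.{u} A) i).obj (ModuleCat.of A (A ⧸ I))).obj
      (ModuleCat.of A B)) := by
  subst hI
  obtain ⟨n, rfl⟩ : ∃ n, i = n + 1 := ⟨i - 1, by omega⟩
  have hAB : IsWeaklyRegular (A ⊗[A] B) rs :=
    ((TensorProduct.lid A B).isWeaklyRegular_congr rs).mpr
      ((isWeaklyRegular_map_algebraMap_iff B B rs).mp hB)
  have hquot := ModuleCat.isZero_Tor_succ_quotient_ofList_smul_top (M := ModuleCat.of A B) hA hAB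
    (ModuleCat.isZero_Tor_succ_of_flat (ModuleCat.of A A)) n
  exact ModuleCat.isZero_Tor_of_linearEquiv
    (Submodule.quotEquivOfEq _ _ (by rw [smul_eq_mul, Ideal.mul_top])) hquot
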